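/- arXiv:1411.6810 — 3 statements merged into one kernel-verified Lean document; each statement's English description precedes it below -/
import Mathlib

section
/- If A ⊆ ℝ² is strictly convex (compact convex with no line segments on its boundary) and B = A + v is a translate of A with v ≠ 0, then the boundaries of A and B intersect in at most two points. -/
set_option linter.unnecessarySeqFocus false

abbrev Plane := EuclideanSpace ℝ (Fin 2)

def translateSet (T : Set Plane) (v : Plane) : Set Plane := (· + v) '' T

/-- A set is strictly convex in the sense used here: its boundary contains no
nondegenerate line segment. -/
def NoSegmentOnBoundary (A : Set Plane) : Prop :=
  ∀ x y : Plane, x ≠ y → ¬ segment ℝ x y ⊆ frontier A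

/-- A cross-product linear functional vanishing on `v`. -/
def crossv (v u : Plane) : ℝ := u 1 * v 0 - u 0 * v 1

lemma crossv_eq_zero {v u : Plane} (hv : v ≠ 0) (h : crossv v u = 0) :
    ∃ c : ℝ, u = c • v := by
  have h' : u 1 * v 0 = u 0 * v 1 := by unfold crossv at h; linarith
  by_cases h0 : v 0 = 0
  · have h1 : v 1 ≠ 0 := by
      intro h1; apply hv; ext i; fin_cases i <;> simp [h0, h1]
    have hu0 : u 0 = 0 := by
      have : u 0 * v 1 = 0 := by rw [← h', h0]; ring
      rcases mul_eq_zero.mp this with h | h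
      · exact h
      · exact absurd h h1
    have e0 : u 0 = (u 1 / v 1) * v 0 := by rw [hu0, h0]; ring
    have e1 : u 1 = (u 1 / v 1) * v 1 := by field_simp
    exact ⟨u 1 / v 1, by ext i; fin_cases i <;> simp [PiLp.smul_apply, smul_eq_mul] <;>
      [exact e0; exact e1]⟩
  · have e0 : u 0 = (u 0 / v 0) * v 0 := by field_simp
    have e1 : u 1 = (u 0 / v 0) * v 1 := by field_simp; linarith [h']
    exact ⟨u 0 / v 0, by ext i; fin_cases i <;> simp [PiLp.smul_apply, smul_eq_mul] <;>
      [exact e0; exact e1]⟩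

lemma seg_frontier {A : Set Plane} (hconv : Convex ℝ A) (hcl : IsClosed A)
    {a b x : Plane} (ha : a ∈ A) (hb : b ∈ A) (hx : x ∈ frontier A)
    (hseg : x ∈ openSegment ℝ a b) : segment ℝ a b ⊆ frontier A := by
  intro y hy
  rw [openSegment_eq_image] at hseg
  obtain ⟨t, ht, hxt⟩ := hseg
  have hyA : y ∈ A := hconv.segment_subset ha hb hy
  rw [segment_eq_image] at hy
  obtain ⟨s, hs, hys⟩ := hy
  have hxni : x ∉ interior A := fun hi =>
    (disjoint_interior_frontier (s := A)).ne_of_mem hi hx rfl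
  rw [hcl.frontier_eq]
  refine ⟨hyA, fun hyint => ?_⟩
  apply hxni
  obtain ⟨ht0, ht1⟩ := ht
  obtain ⟨hs0, hs1⟩ := hs
  rcases lt_trichotomy s t with hst | hst | hst
  · apply hconv.openSegment_interior_closure_subset_interior hyint (subset_closure hb)
    rw [openSegment_eq_image]
    have h1s : (0:ℝ) < 1 - s := by linarith
    refine ⟨(t - s) / (1 - s), ⟨div_pos (by linarith) h1s,
      (div_lt_one h1s).2 (by linarith)⟩, ?_⟩
    rw [← hxt, ← hys]
    match_scalars <;> field_simp <;> ring
  · have : x = y := by rw [← hxt, ← hys, hst]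
    rw [this]; exact hyint
  · apply hconv.openSegment_interior_closure_subset_interior hyint (subset_closure ha)
    rw [openSegment_eq_image]
    have hs0' : (0:ℝ) < s := by linarith
    refine ⟨(s - t) / s, ⟨div_pos (by linarith) hs0',
      (div_lt_one hs0').2 (by linarith)⟩, ?_⟩
    rw [← hxt, ← hys]
    match_scalars <;> field_simp <;> ring

lemma no_frontier_openSegment {A : Set Plane} (hconv : Convex ℝ A) (hcl : IsClosed A)
    (hstrict : NoSegmentOnBoundary A) {a b x : Plane}
    (ha : a ∈ A) (hb : b ∈ A) (hab : a ≠ b) (hx : x ∈ frontier A)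
    (hseg : x ∈ openSegment ℝ a b) : False :=
  hstrict a b hab (seg_frontier hconv hcl ha hb hx hseg)

lemma three_col {A : Set Plane} (hconv : Convex ℝ A) (hcl : IsClosed A)
    (hstrict : NoSegmentOnBoundary A) {z u : Plane} (hu : u ≠ 0) {s₁ s₂ s₃ : ℝ}
    (h12 : s₁ < s₂) (h23 : s₂ < s₃)
    (h1 : z + s₁ • u ∈ A) (h3 : z + s₃ • u ∈ A) (h2 : z + s₂ • u ∈ frontier A) : False := by
  have hne : z + s₁ • u ≠ z + s₃ • u := by
    intro h
    have h' : (s₃ - s₁) • u = 0 := by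
      rw [sub_smul, sub_eq_zero]
      exact (add_right_injective z h).symm
    rcases smul_eq_zero.mp h' with h'' | h''
    · linarith
    · exact hu h''
  apply no_frontier_openSegment hconv hcl hstrict h1 h3 hne h2
  rw [openSegment_eq_image]
  have h31 : (0:ℝ) < s₃ - s₁ := by linarith
  refine ⟨(s₂ - s₁) / (s₃ - s₁), ⟨div_pos (by linarith) h31,
    (div_lt_one h31).2 (by linarith)⟩, ?_⟩
  match_scalars <;> field_simp <;> ring

lemma transC {A : Set Plane} (hconv : Convex ℝ A) (hcl : IsClosed A)
    (hstrict : NoSegmentOnBoundary A) {v m q : Plane} (hv : v ≠ 0) {c : ℝ}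
    (hm : m ∈ A) (hmv : m - v ∈ A) (hq : q ∈ frontier A) (hqv : q - v ∈ frontier A)
    (hc : q - m = c • v) (hc0 : c ≠ 0) : False := by
  have hq_eq : q = m + c • v := by rw [← hc]; abel
  have hqv_eq : q - v = m + (c - 1) • v := by rw [sub_smul, one_smul, ← hc]; abel
  have hmv_eq : m - v = m + (-1 : ℝ) • v := by rw [neg_one_smul]; abel
  rcases hc0.lt_or_gt with hneg | hpos
  · exact three_col hconv hcl hstrict hv (s₁ := c - 1) (s₂ := c) (s₃ := 0)
      (by linarith) (by linarith)
      (by rw [← hqv_eq]; exact hcl.frontier_subset hqv)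
      (by simpa using hm)
      (by rw [← hq_eq]; exact hq)
  · exact three_col hconv hcl hstrict hv (s₁ := -1) (s₂ := c - 1) (s₃ := c)
      (by linarith) (by linarith)
      (by rw [← hmv_eq]; exact hmv)
      (by rw [← hq_eq]; exact hcl.frontier_subset hq)
      (by rw [← hqv_eq]; exact hqv)

lemma mid_aux {A : Set Plane} (hconv : Convex ℝ A) (hcl : IsClosed A)
    (hstrict : NoSegmentOnBoundary A) {v : Plane} (hv : v ≠ 0) {p q r : Plane}
    (hp : p ∈ frontier A) (hpv : p - v ∈ frontier A)
    (hq : q ∈ frontier A) (hqv : q - v ∈ frontier A)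
    (hr : r ∈ frontier A) (hrv : r - v ∈ frontier A)
    (h1 : crossv v p < crossv v q) (h2 : crossv v q < crossv v r) : False := by
  set l : ℝ := (crossv v q - crossv v p) / (crossv v r - crossv v p) with hl
  have hrp : (0:ℝ) < crossv v r - crossv v p := by linarith
  have hl0 : 0 < l := div_pos (by linarith) hrp
  have hl1 : l < 1 := (div_lt_one hrp).2 (by linarith)
  set m : Plane := (1 - l) • p + l • r with hm
  have hmA : m ∈ A := hconv (hcl.frontier_subset hp) (hcl.frontier_subset hr)
    (by linarith) (le_of_lt hl0) (by ring)
  have hmvA : m - v ∈ A := by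
    have e : m - v = (1 - l) • (p - v) + l • (r - v) := by rw [hm]; module
    rw [e]
    exact hconv (hcl.frontier_subset hpv) (hcl.frontier_subset hrv)
      (by linarith) (le_of_lt hl0) (by ring)
  have key : (1 - l) * crossv v p + l * crossv v r = crossv v q := by
    rw [hl]; field_simp; ring
  have hmq : crossv v m = crossv v q := by
    rw [← key, hm]
    simp only [crossv, PiLp.add_apply, PiLp.smul_apply, smul_eq_mul]
    ring
  have hcross : crossv v (q - m) = 0 := by
    simp only [crossv, PiLp.sub_apply] at hmq ⊢
    linarith
  obtain ⟨c, hc⟩ := crossv_eq_zero hv hcross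
  by_cases hc0 : c = 0
  · have hqm : q = m := by
      rw [hc0, zero_smul] at hc
      exact sub_eq_zero.mp hc
    have hpr : p ≠ r := fun h => by rw [h] at h1; linarith
    apply no_frontier_openSegment hconv hcl hstrict (hcl.frontier_subset hp)
      (hcl.frontier_subset hr) hpr hq
    rw [openSegment_eq_image]
    exact ⟨l, ⟨hl0, hl1⟩, by show (1-l) • p + l • r = q; rw [← hm, ← hqm]⟩
  · exact transC hconv hcl hstrict hv hmA hmvA hq hqv hc hc0

/-- the boundaries of a compact strictly convex set with nonempty interior
and a nontrivial translate of it intersect in at most two points. -/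
theorem stmt_3 (A : Set Plane) (hAc : IsCompact A) (hAconv : Convex ℝ A)
    (hAint : (interior A).Nonempty) (hstrict : NoSegmentOnBoundary A)
    (v : Plane) (hv : v ≠ 0) :
    ∃ x y : Plane, frontier A ∩ frontier (translateSet A v) ⊆ {x, y} := by
  by_contra hcon
  push_neg at hcon
  have hcl : IsClosed A := hAc.isClosed
  have htrans : ∀ x : Plane, x ∈ frontier (translateSet A v) → x - v ∈ frontier A := by
    intro x hx
    have heq : translateSet A v = (Homeomorph.subRight v) ⁻¹' A := by
      ext y
      simp only [translateSet, Set.mem_image, Homeomorph.subRight, Set.mem_preimage,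
        Homeomorph.homeomorph_mk_coe, Equiv.subRight_apply, Equiv.coe_fn_mk]
      constructor
      · rintro ⟨w, hw, rfl⟩; simpa using hw
      · intro h; exact ⟨y - v, h, by abel⟩
    rw [heq, ← Homeomorph.preimage_frontier] at hx
    exact hx
  obtain ⟨p1, hp1, -⟩ := Set.not_subset.mp (hcon 0 0)
  obtain ⟨p2, hp2, hne2⟩ := Set.not_subset.mp (hcon p1 p1)
  obtain ⟨p3, hp3, hne3⟩ := Set.not_subset.mp (hcon p1 p2)
  simp only [Set.mem_insert_iff, Set.mem_singleton_iff, not_or] at hne2 hne3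
  obtain ⟨f1, g1⟩ := hp1
  obtain ⟨f2, g2⟩ := hp2
  obtain ⟨f3, g3⟩ := hp3
  have g1' := htrans _ g1
  have g2' := htrans _ g2
  have g3' := htrans _ g3
  have hdist : ∀ a b : Plane, a ∈ frontier A → a - v ∈ frontier A →
      b ∈ frontier A → b - v ∈ frontier A → a ≠ b → crossv v a ≠ crossv v b := by
    intro a b ha hav hb hbv hab heq
    have h0 : crossv v (b - a) = 0 := by
      simp only [crossv, PiLp.sub_apply] at heq ⊢
      linarith
    obtain ⟨c, hc⟩ := crossv_eq_zero hv h0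
    have hc0 : c ≠ 0 := by
      intro h
      rw [h, zero_smul] at hc
      exact hab (sub_eq_zero.mp hc).symm
    exact transC hAconv hcl hstrict hv (hcl.frontier_subset ha)
      (hcl.frontier_subset hav) hb hbv hc hc0
  have hne2' : p2 ≠ p1 := hne2.1
  have hne31 : p3 ≠ p1 := hne3.1
  have hne32 : p3 ≠ p2 := hne3.2
  have d12 : crossv v p1 ≠ crossv v p2 := hdist p1 p2 f1 g1' f2 g2' (Ne.symm hne2')
  have d13 : crossv v p1 ≠ crossv v p3 := hdist p1 p3 f1 g1' f3 g3' (Ne.symm hne31)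
  have d23 : crossv v p2 ≠ crossv v p3 := hdist p2 p3 f2 g2' f3 g3' (Ne.symm hne32)
  rcases d12.lt_or_gt with a12 | a21 <;> rcases d13.lt_or_gt with a13 | a31 <;>
    rcases d23.lt_or_gt with a23 | a32
  · exact mid_aux hAconv hcl hstrict hv f1 g1' f2 g2' f3 g3' a12 a23
  · exact mid_aux hAconv hcl hstrict hv f1 g1' f3 g3' f2 g2' a13 a32
  · linarith
  · exact mid_aux hAconv hcl hstrict hv f3 g3' f1 g1' f2 g2' a31 a12
  · exact mid_aux hAconv hcl hstrict hv f2 g2' f1 g1' f3 g3' a21 a13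
  · linarith
  · exact mid_aux hAconv hcl hstrict hv f2 g2' f3 g3' f1 g1' a23 a31
  · exact mid_aux hAconv hcl hstrict hv f3 g3' f2 g2' f1 g1' a32 a21
end

section
/- Let P be a finite set of n points in ℝ² and K a convex compact prototype. Then the number of distinct covered point sets of canonical translates of K (equivalently, distinct canonical translates) is at most k + e₀ ≤ k + n, where k is the number of pairs of point inverses of K through points of P whose boundaries intersect and e₀ the number of point inverses disjoint from all others. -/
def coveredSet (P T₀ : Set Plane) (v : Plane) : Set Plane := P ∩ translateSet T₀ v

/-- The point inverse of `K` through `p`: the set `p - K` of positions `v` such that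
the translate `K + v` contains `p`. -/
def pointInv (K : Set Plane) (p : Plane) : Set Plane := (fun x => p - x) '' K

/-- The collection of covered point sets of canonical translates of `K` with respect
to `P`. -/
def canonicalSets (P K : Set Plane) : Set (Set Plane) :=
  {S | ∃ v : Plane, S = coveredSet P K v ∧ S.Nonempty ∧
        ∀ w : Plane, ¬ S ⊂ coveredSet P K w}

/-!
A canonical set `{p}` forces `pointInv K p` to miss every other point inverse, so `p` is
isolated. For a larger canonical set `S`, let `w` be the point of minimal norm of
`⋂ p ∈ S, pointInv K p`; by maximality `S` is the covered set of `w`. Helly's theorem in the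
plane, applied to these point inverses together with the open ball of radius `‖w‖`, shows that
`w` is already the point of minimal norm of some `pointInv K p ∩ pointInv K q`. These two
point inverses are overlapping translates of each other, so their frontiers meet, and since
the point of minimal norm of a convex set is unique, `S` is determined by the pair `{p, q}`.
-/

open Set Pointwise

section Helly

variable {𝕜 E ι : Type*} [Field 𝕜] [LinearOrder 𝕜] [IsStrictOrderedRing 𝕜]
  [AddCommGroup E] [Module 𝕜 E] [FiniteDimensional 𝕜 E]

/-- Helly's theorem applied to the family `C i` together with the extra set `L`. -/
theorem Convex.exists_card_le_finrank_biInter_inter_eq_empty {C : ι → Set E} {L : Set E}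
    {s : Finset ι} (hC : ∀ i ∈ s, Convex 𝕜 (C i)) (hL : Convex 𝕜 L)
    (hs : (⋂ i ∈ s, C i).Nonempty) (hsL : (⋂ i ∈ s, C i) ∩ L = ∅) :
    ∃ I ⊆ s, I.card ≤ Module.finrank 𝕜 E ∧ (⋂ i ∈ I, C i) ∩ L = ∅ := by
  by_contra! hsmall
  let F : Option ι → Set E := fun o => o.elim L C
  have hF : ∀ o ∈ s.insertNone, Convex 𝕜 (F o) := by
    rintro (_ | i) hi
    exacts [hL, hC i (Finset.mem_insertNone.1 hi i rfl)]
  have hinter : ∀ I ⊆ s.insertNone, I.card ≤ Module.finrank 𝕜 E + 1 →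
      (⋂ o ∈ I, F o).Nonempty := by
    intro I hIs hI
    have hJs : I.eraseNone ⊆ s := fun i hi =>
      Finset.mem_insertNone.1 (hIs (Finset.mem_eraseNone.1 hi)) i rfl
    suffices ∃ x, (none ∈ I → x ∈ L) ∧ ∀ i ∈ I.eraseNone, x ∈ C i by
      obtain ⟨x, hxL, hxC⟩ := this
      refine ⟨x, mem_iInter₂.2 ?_⟩
      rintro (_ | i) hi
      exacts [hxL hi, hxC i (Finset.mem_eraseNone.2 hi)]
    by_cases hnone : none ∈ I
    · obtain ⟨x, hxC, hxL⟩ := hsmall _ hJs (by rw [Finset.card_eraseNone_of_mem hnone]; omega)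
      exact ⟨x, fun _ => hxL, fun i hi => mem_iInter₂.1 hxC i hi⟩
    · obtain ⟨x, hx⟩ := hs
      exact ⟨x, fun h => absurd h hnone, fun i hi => mem_iInter₂.1 hx i (hJs hi)⟩
  obtain ⟨x, hx⟩ := Convex.helly_theorem' hF hinter
  have hxF := mem_iInter₂.1 hx
  refine hsL.subset ⟨mem_iInter₂.2 fun i hi => hxF (some i) ?_, hxF none ?_⟩
  · simpa [Finset.mem_insertNone] using hi
  · simp [Finset.mem_insertNone]

end Helly

section MinNorm

variable {E ι : Type*} [NormedAddCommGroup E] [NormedSpace ℝ E]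

theorem Convex.eq_of_isMinOn_norm [StrictConvexSpace ℝ E] {D : Set E} (hD : Convex ℝ D)
    {v w : E} (hv : v ∈ D) (hw : w ∈ D) (hvmin : IsMinOn (‖·‖) D v)
    (hwmin : IsMinOn (‖·‖) D w) : v = w := by
  by_contra hne
  have hmid := hD hv hw (by norm_num : (0 : ℝ) ≤ 1 / 2) (by norm_num : (0 : ℝ) ≤ 1 / 2)
    (by norm_num)
  have hlt : ‖(1 / 2 : ℝ) • v + (1 / 2 : ℝ) • w‖ < ‖v‖ :=
    norm_combo_lt_of_ne le_rfl (hwmin hv) hne (by norm_num) (by norm_num) (by norm_num)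
  exact (hvmin hmid).not_gt hlt

/-- An arbitrary point when `D` has no point of minimal norm. -/
noncomputable def minNormPoint (D : Set E) : E :=
  Classical.epsilon fun w => w ∈ D ∧ IsMinOn (‖·‖) D w

theorem Convex.minNormPoint_eq [StrictConvexSpace ℝ E] {D : Set E} (hD : Convex ℝ D) {w : E}
    (hw : w ∈ D) (hwmin : IsMinOn (‖·‖) D w) : minNormPoint D = w :=
  have h := Classical.epsilon_spec (p := fun w => w ∈ D ∧ IsMinOn (‖·‖) D w)
    ⟨w, hw, hwmin⟩
  hD.eq_of_isMinOn_norm h.1 hw h.2 hwmin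

theorem exists_pair_isMinOn_norm [FiniteDimensional ℝ E] (hE : Module.finrank ℝ E ≤ 2)
    {C : ι → Set E} {s : Finset ι} (hs : 1 < s.card) (hC : ∀ i ∈ s, Convex ℝ (C i))
    {w : E} (hw : w ∈ ⋂ i ∈ s, C i) (hwmin : IsMinOn (‖·‖) (⋂ i ∈ s, C i) w) :
    ∃ i ∈ s, ∃ j ∈ s, i ≠ j ∧ IsMinOn (‖·‖) (C i ∩ C j) w := by
  classical
  have hball : (⋂ i ∈ s, C i) ∩ Metric.ball 0 ‖w‖ = ∅ :=
    eq_empty_of_forall_notMem fun x ⟨hx, hxw⟩ =>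
      (hwmin hx).not_gt (mem_ball_zero_iff.1 hxw)
  obtain ⟨I, hIs, hI, hIball⟩ := Convex.exists_card_le_finrank_biInter_inter_eq_empty hC
    (convex_ball 0 ‖w‖) ⟨w, hw⟩ hball
  obtain ⟨J, hIJ, hJs, hJ⟩ := Finset.exists_subsuperset_card_eq hIs (hI.trans hE) hs
  obtain ⟨i, j, hij, rfl⟩ := Finset.card_eq_two.1 hJ
  refine ⟨i, hJs (by simp), j, hJs (by simp), hij, fun x hx => ?_⟩
  by_contra hxw
  refine hIball.subset ⟨mem_iInter₂.2 fun k hk => ?_, mem_ball_zero_iff.2 (not_le.1 hxw)⟩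
  rcases Finset.mem_insert.1 (hIJ hk) with rfl | hk
  exacts [hx.1, Finset.mem_singleton.1 hk ▸ hx.2]

end MinNorm

section Translates

variable {E : Type*} [NormedAddCommGroup E] [NormedSpace ℝ E]

theorem exists_ne_zero_apply_eq_zero [FiniteDimensional ℝ E] (hE : 2 ≤ Module.finrank ℝ E)
    (c : E) : ∃ f : E →L[ℝ] ℝ, f ≠ 0 ∧ f c = 0 := by
  have hspan : (ℝ ∙ c) < ⊤ := Submodule.lt_top_of_finrank_lt_finrank <|
    lt_of_le_of_lt (by simpa using finrank_span_le_card (R := ℝ) ({c} : Set E)) (by omega)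
  obtain ⟨f, hf, hker⟩ := (ℝ ∙ c).exists_le_ker_of_lt_top hspan
  refine ⟨LinearMap.toContinuousLinearMap f, fun h => hf ?_,
    hker (Submodule.mem_span_singleton_self c)⟩
  simpa using congrArg ContinuousLinearMap.toLinearMap h

/-- If `x` were interior to `c +ᵥ A`, maximality would propagate from `A ∩ (c +ᵥ A)` to all of
the convex set `A`, and then to the interior point `x - c` of `A`, where a nonzero linear form
cannot attain a maximum. -/
theorem notMem_interior_vadd_of_isMaxOn {A : Set E} (hA : Convex ℝ A) {f : E →L[ℝ] ℝ}
    (hf : f ≠ 0) {c x : E} (hc : f c = 0) (hxA : x ∈ A) (hx : IsMaxOn f (A ∩ (c +ᵥ A)) x) :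
    x ∉ interior (c +ᵥ A) := by
  intro hint
  have hlocal : IsLocalMaxOn f A x := by
    filter_upwards [inter_mem_nhdsWithin A (mem_interior_iff_mem_nhds.1 hint)] with y hy
    exact hx hy
  have hmaxA : IsMaxOn f A x :=
    IsMaxOn.of_isLocalMaxOn_of_concaveOn hxA hlocal (f.toLinearMap.concaveOn hA)
  have hxc : x - c ∈ interior A := by
    rw [interior_vadd, mem_vadd_set_iff_neg_vadd_mem, vadd_eq_add, neg_add_eq_sub] at hint
    exact hint
  have hmax' : IsMaxOn f A (x - c) := fun y hy => by
    simpa [map_sub, hc] using hmaxA hy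
  exact hf ((hmax'.isLocalMax (mem_interior_iff_mem_nhds.1 hxc)).hasFDerivAt_eq_zero
    f.hasFDerivAt)

/-- The point of `A ∩ (c +ᵥ A)` maximising a nonzero linear form vanishing at `c` lies on both
frontiers; such a form exists because the dimension is at least two. -/
theorem IsCompact.frontier_inter_frontier_vadd_nonempty [FiniteDimensional ℝ E]
    (hE : 2 ≤ Module.finrank ℝ E) {A : Set E} (hAc : IsCompact A) (hA : Convex ℝ A) {c : E}
    (hne : (A ∩ (c +ᵥ A)).Nonempty) : (frontier A ∩ frontier (c +ᵥ A)).Nonempty := by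
  obtain ⟨f, hf, hfc⟩ := exists_ne_zero_apply_eq_zero hE c
  have hcA : IsCompact (c +ᵥ A) := hAc.vadd c
  obtain ⟨x, hx, hxmax⟩ :=
    (hAc.inter_right hcA.isClosed).exists_isMaxOn hne f.continuous.continuousOn
  have hxA : x ∉ interior A := by
    have hmax' : IsMaxOn f ((c +ᵥ A) ∩ (-c +ᵥ (c +ᵥ A))) x := by
      rwa [neg_vadd_vadd, inter_comm]
    simpa using notMem_interior_vadd_of_isMaxOn (hA.vadd c) hf (by simp [hfc]) hx.2 hmax'
  rw [hAc.isClosed.frontier_eq, hcA.isClosed.frontier_eq]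
  exact ⟨x, ⟨hx.1, hxA⟩, hx.2, notMem_interior_vadd_of_isMaxOn hA hf hfc hx.1 hxmax⟩

end Translates

theorem pointInv_eq_vadd_neg (K : Set Plane) (p : Plane) : pointInv K p = p +ᵥ -K := by
  ext v
  simp only [pointInv, mem_image, mem_vadd_set, mem_neg, vadd_eq_add]
  constructor
  · rintro ⟨x, hx, rfl⟩
    exact ⟨-x, by simpa using hx, by abel⟩
  · rintro ⟨x, hx, rfl⟩
    exact ⟨-x, hx, by abel⟩

theorem mem_pointInv {K : Set Plane} {p v : Plane} : v ∈ pointInv K p ↔ p - v ∈ K := by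
  simp [pointInv_eq_vadd_neg, mem_vadd_set_iff_neg_vadd_mem, neg_add_eq_sub]

theorem pointInv_eq_vadd_pointInv (K : Set Plane) (p q : Plane) :
    pointInv K q = (q - p) +ᵥ pointInv K p := by
  rw [pointInv_eq_vadd_neg, pointInv_eq_vadd_neg, vadd_vadd, sub_add_cancel]

theorem Convex.pointInv {K : Set Plane} (hK : Convex ℝ K) (p : Plane) :
    Convex ℝ (pointInv K p) := by
  rw [pointInv_eq_vadd_neg]
  exact hK.neg.vadd p

theorem IsCompact.pointInv {K : Set Plane} (hK : IsCompact K) (p : Plane) :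
    IsCompact (pointInv K p) := by
  rw [pointInv_eq_vadd_neg]
  exact hK.neg.vadd p

theorem mem_coveredSet {P K : Set Plane} {v p : Plane} :
    p ∈ coveredSet P K v ↔ p ∈ P ∧ v ∈ pointInv K p := by
  simp [coveredSet, translateSet, mem_pointInv, sub_eq_add_neg]

section Canonical

variable {P K S : Set Plane}

theorem subset_of_mem_canonicalSets (hS : S ∈ canonicalSets P K) : S ⊆ P := by
  obtain ⟨v, rfl, -⟩ := hS
  exact inter_subset_left

theorem coveredSet_eq_of_mem_canonicalSets (hS : S ∈ canonicalSets P K) {w : Plane}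
    (hw : ∀ p ∈ S, w ∈ pointInv K p) : coveredSet P K w = S := by
  have hsub : S ⊆ coveredSet P K w := fun p hp =>
    mem_coveredSet.2 ⟨subset_of_mem_canonicalSets hS hp, hw p hp⟩
  exact (hsub.eq_or_ssubset.resolve_right (hS.choose_spec.2.2 w)).symm

theorem pointInv_inter_eq_empty_of_singleton_mem_canonicalSets {p : Plane}
    (hp : {p} ∈ canonicalSets P K) {q : Plane} (hq : q ∈ P) (hqp : q ≠ p) :
    pointInv K p ∩ pointInv K q = ∅ := by
  refine eq_empty_of_forall_notMem fun w ⟨hwp, hwq⟩ => hqp ?_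
  have hcov := coveredSet_eq_of_mem_canonicalSets hp (w := w) (by simpa using hwp)
  have hqw := mem_coveredSet.2 ⟨hq, hwq⟩
  rwa [hcov, mem_singleton_iff] at hqw

theorem exists_pair_isMinOn_norm_of_mem_canonicalSets (hK : IsCompact K) (hKconv : Convex ℝ K)
    (hP : P.Finite) (hS : S ∈ canonicalSets P K) (hSnt : S.Nontrivial) :
    ∃ p ∈ S, ∃ q ∈ S, p ≠ q ∧ ∃ w ∈ pointInv K p ∩ pointInv K q,
      IsMinOn (‖·‖) (pointInv K p ∩ pointInv K q) w ∧ coveredSet P K w = S := by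
  have hSfin : S.Finite := hP.subset (subset_of_mem_canonicalSets hS)
  set Q := ⋂ p ∈ hSfin.toFinset, pointInv K p
  have hmemQ : ∀ {w}, w ∈ Q ↔ ∀ p ∈ S, w ∈ pointInv K p := by simp [Q]
  obtain ⟨p₀, hp₀⟩ := hSnt.nonempty
  have hQ : IsCompact Q := (hK.pointInv p₀).of_isClosed_subset
    (isClosed_biInter fun p _ => (hK.pointInv p).isClosed)
    (biInter_subset_of_mem (hSfin.mem_toFinset.2 hp₀))
  have hQne : Q.Nonempty := by
    obtain ⟨v, hSv, -⟩ := hS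
    exact ⟨v, hmemQ.2 fun p hp => (mem_coveredSet.1 (hSv ▸ hp)).2⟩
  obtain ⟨w, hwQ, hwmin⟩ := hQ.exists_isMinOn hQne continuous_norm.continuousOn
  obtain ⟨p, hp, q, hq, hpq, hpqmin⟩ := exists_pair_isMinOn_norm (by simp)
    (by simpa [Finset.one_lt_card_iff_nontrivial] using hSnt)
    (fun p _ => hKconv.pointInv p) hwQ hwmin
  rw [Finite.mem_toFinset] at hp hq
  exact ⟨p, hp, q, hq, hpq, w, ⟨hmemQ.1 hwQ p hp, hmemQ.1 hwQ q hq⟩, hpqmin,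
    coveredSet_eq_of_mem_canonicalSets hS (hmemQ.1 hwQ)⟩

end Canonical

def touchingPairs (P K : Set Plane) : Set (Set Plane) :=
  {s | ∃ p ∈ P, ∃ q ∈ P, p ≠ q ∧ s = {p, q} ∧
    (frontier (pointInv K p) ∩ frontier (pointInv K q)).Nonempty}

def isolatedPoints (P K : Set Plane) : Set Plane :=
  {p ∈ P | ∀ q ∈ P, q ≠ p → frontier (pointInv K p) ∩ frontier (pointInv K q) = ∅}

theorem touchingPairs_finite {P : Set Plane} (hP : P.Finite) (K : Set Plane) :
    (touchingPairs P K).Finite :=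
  ((hP.prod hP).image fun pq : Plane × Plane => ({pq.1, pq.2} : Set Plane)).subset
    fun _ ⟨p, hp, q, hq, _, hs, _⟩ => ⟨(p, q), ⟨hp, hq⟩, hs.symm⟩

theorem canonicalSets_subset_image_touchingPairs_union {P K : Set Plane} (hK : IsCompact K)
    (hKconv : Convex ℝ K) (hP : P.Finite) :
    canonicalSets P K ⊆
      (fun s => coveredSet P K (minNormPoint (⋂ p ∈ s, pointInv K p))) '' touchingPairs P K ∪
        (fun p => {p}) '' isolatedPoints P K := by
  intro S hS
  rcases hS.choose_spec.2.1.exists_eq_singleton_or_nontrivial with ⟨p, rfl⟩ | hSnt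
  · refine Or.inr ⟨p, ⟨subset_of_mem_canonicalSets hS rfl, fun q hq hqp => ?_⟩, rfl⟩
    have hpq := pointInv_inter_eq_empty_of_singleton_mem_canonicalSets hS hq hqp
    exact subset_empty_iff.1 <| hpq ▸ inter_subset_inter
      (hK.pointInv p).isClosed.frontier_subset (hK.pointInv q).isClosed.frontier_subset
  obtain ⟨p, hp, q, hq, hpq, w, hw, hwmin, hcov⟩ :=
    exists_pair_isMinOn_norm_of_mem_canonicalSets hK hKconv hP hS hSnt
  have hSP := subset_of_mem_canonicalSets hS
  refine Or.inl ⟨{p, q}, ⟨p, hSP hp, q, hSP hq, hpq, rfl, ?_⟩, ?_⟩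
  · rw [pointInv_eq_vadd_pointInv K p q] at hw ⊢
    exact (hK.pointInv p).frontier_inter_frontier_vadd_nonempty (by simp) (hKconv.pointInv p)
      ⟨w, hw⟩
  · simp only [biInter_insert, biInter_singleton]
    rw [((hKconv.pointInv p).inter (hKconv.pointInv q)).minNormPoint_eq hw hwmin, hcov]

/-- for a convex compact prototype `K` and a finite point set `P` with `n`
points, the number of distinct canonical covered point sets is at most `k + e₀ ≤ k + n`,
where `k` is the number of intersecting pairs among the point inverses through `P` and
`e₀` the number of point inverses disjoint from all others. -/
theorem stmt_9 (K : Set Plane) (hKc : IsCompact K) (hKconv : Convex ℝ K)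
    (P : Set Plane) (hP : P.Finite) (n : ℕ) (hn : P.ncard = n)
    (k e₀ : ℕ)
    (hk : k = Set.ncard {s : Set Plane | ∃ p ∈ P, ∃ q ∈ P, p ≠ q ∧ s = {p, q} ∧
        (frontier (pointInv K p) ∩ frontier (pointInv K q)).Nonempty})
    (he₀ : e₀ = Set.ncard {p ∈ P | ∀ q ∈ P, q ≠ p →
        frontier (pointInv K p) ∩ frontier (pointInv K q) = ∅}) :
    (canonicalSets P K).ncard ≤ k + e₀ ∧ k + e₀ ≤ k + n := by
  change k = (touchingPairs P K).ncard at hk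
  change e₀ = (isolatedPoints P K).ncard at he₀
  have hT := touchingPairs_finite hP K
  have hI : (isolatedPoints P K).Finite := hP.subset (sep_subset _ _)
  subst hk he₀ hn
  refine ⟨?_, Nat.add_le_add_left (ncard_le_ncard (sep_subset _ _) hP) _⟩
  calc (canonicalSets P K).ncard
      ≤ (_ '' touchingPairs P K ∪ _ '' isolatedPoints P K).ncard :=
        ncard_le_ncard (canonicalSets_subset_image_touchingPairs_union hKc hKconv hP)
          ((hT.image _).union (hI.image _))
    _ ≤ (_ '' touchingPairs P K).ncard + (_ '' isolatedPoints P K).ncard := ncard_union_le _ _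
    _ ≤ (touchingPairs P K).ncard + (isolatedPoints P K).ncard :=
        Nat.add_le_add (ncard_image_le hT) (ncard_image_le hI)
end

section
/- For every n divisible by 4 there is a configuration of n unit circles in the plane with Θ(n²) intersecting pairs and Θ(n²) distinct maximal covered point sets (canonical disks); hence the bound of k + n on the number of distinct canonical translates for convex prototypes is tight up to constants. -/
/-!
Place `a` points on each half-axis near the unit circle, with step `g = 1 / (4 (a + 1)²)`:
`W_i = (-1 + (i + ¼) g, 0)` and `E_j = (1 + (j - ¼) g, 0)` on the `x`-axis and, symmetrically,
`S_l` and `N_k` on the `y`-axis. Since `(p g)², (q g)² ≤ g / 4`, the perpendicular offset of the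
centre `(p g, q g)` costs less than the quarter step, so the unit disk there covers exactly the
`W_i` with `i ≥ p`, the `E_j` with `j ≤ p`, the `N_k` with `k ≤ q` and the `S_l` with `l ≥ q`:
the `a²` centres give `a²` distinct covered sets. Each of them is maximal, because an uncovered
point is more than `2` away from the covered point with index `p` (or `q`) on the opposite arm,
so no unit disk contains both. Every west point is within `2` of every north point, which gives
`a²` intersecting pairs.
-/

open Set Function Metric

theorem coveredSet_closedBall (P : Set Plane) (v : Plane) (r : ℝ) :
    coveredSet P (closedBall 0 r) v = P ∩ closedBall v r := by
  simp [coveredSet, translateSet]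

theorem canonicalSets_finite {P : Set Plane} (hP : P.Finite) (K : Set Plane) :
    (canonicalSets P K).Finite :=
  hP.finite_subsets.subset fun _ ⟨_, hS, _⟩ => hS ▸ inter_subset_left

theorem not_ssubset_coveredSet_of_far {P : Set Plane} {v : Plane} {r : ℝ}
    (hfar : ∀ x ∈ P, r < dist x v → ∃ y ∈ P, dist y v ≤ r ∧ 2 * r < dist x y) (w : Plane) :
    ¬ coveredSet P (closedBall 0 r) v ⊂ coveredSet P (closedBall 0 r) w := by
  simp only [coveredSet_closedBall]
  rintro ⟨hsub, hne⟩
  obtain ⟨x, ⟨hxP, hxw⟩, hxv⟩ := not_subset.1 hne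
  obtain ⟨y, hyP, hyv, hxy⟩ := hfar x hxP (lt_of_not_ge fun h => hxv ⟨hxP, h⟩)
  have hyw : dist y w ≤ r := (hsub ⟨hyP, hyv⟩).2
  have := dist_triangle_right x y w
  rw [mem_closedBall] at hxw
  linarith

theorem coveredSet_mem_canonicalSets_of_far {P : Set Plane} {v : Plane} {r : ℝ}
    (hne : (P ∩ closedBall v r).Nonempty)
    (hfar : ∀ x ∈ P, r < dist x v → ∃ y ∈ P, dist y v ≤ r ∧ 2 * r < dist x y) :
    coveredSet P (closedBall 0 r) v ∈ canonicalSets P (closedBall 0 r) :=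
  ⟨v, rfl, coveredSet_closedBall P v r ▸ hne, not_ssubset_coveredSet_of_far hfar⟩

theorem card_le_ncard_of_injective {α β : Type*} {t : Set β} (f : α → β) (hf : Injective f)
    (hft : ∀ x, f x ∈ t) (ht : t.Finite) : Nat.card α ≤ t.ncard :=
  ncard_range_of_injective hf ▸ ncard_le_ncard (range_subset_iff.2 hft) ht

section Coordinates

variable {x₁ y₁ x₂ y₂ : ℝ}

theorem dist_vec2 : dist (!₂[x₁, y₁] : Plane) !₂[x₂, y₂] = √((x₁ - x₂) ^ 2 + (y₁ - y₂) ^ 2) := by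
  simp [EuclideanSpace.dist_eq, Fin.sum_univ_two, Real.dist_eq, sq_abs]

theorem dist_vec2_swap :
    dist (!₂[x₁, y₁] : Plane) !₂[x₂, y₂] = dist (!₂[y₁, x₁] : Plane) !₂[y₂, x₂] := by
  rw [dist_vec2, dist_vec2, add_comm]

theorem abs_sub_le_dist_vec2 : |x₁ - x₂| ≤ dist (!₂[x₁, y₁] : Plane) !₂[x₂, y₂] := by
  simpa [Real.dist_eq] using PiLp.dist_apply_le (!₂[x₁, y₁] : Plane) !₂[x₂, y₂] 0

theorem dist_vec2_le_one {δ : ℝ} (hδ : δ ≤ 1) (hx : |x₁ - x₂| ≤ 1 - δ) (hy : y₂ ^ 2 ≤ δ) :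
    dist (!₂[x₁, 0] : Plane) !₂[x₂, y₂] ≤ 1 := by
  have hsq : (x₁ - x₂) ^ 2 ≤ (1 - δ) ^ 2 := sq_le_sq' (abs_le.1 hx).1 (abs_le.1 hx).2
  rw [dist_vec2, Real.sqrt_le_one]
  nlinarith

end Coordinates

namespace CrossConfig

variable (a : ℕ)

noncomputable def spacing : ℝ := 1 / (4 * ((a : ℝ) + 1) ^ 2)

noncomputable def west (i : ℕ) : ℝ := -1 + (i + 1 / 4) * spacing a

noncomputable def east (i : ℕ) : ℝ := 1 + (i - 1 / 4) * spacing a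

noncomputable def point (x : Fin 4 × Fin a) : Plane :=
  ![!₂[west a x.2, 0], !₂[east a x.2, 0], !₂[0, east a x.2], !₂[0, west a x.2]] x.1

noncomputable def witness (p q : ℕ) : Plane := !₂[p * spacing a, q * spacing a]

noncomputable def witnessCover (p q : ℕ) : Set Plane :=
  coveredSet (range (point a)) (closedBall 0 1) (witness a p q)

variable {a}

theorem spacing_pos : 0 < spacing a := by
  unfold spacing; positivity

theorem sq_add_one_mul_spacing : ((a : ℝ) + 1) ^ 2 * spacing a = 1 / 4 := by
  unfold spacing; field_simp

theorem add_one_mul_spacing_le {i : ℕ} (hi : i ≤ a) : ((i : ℝ) + 1) * spacing a ≤ 1 / 4 := by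
  have hia : (i : ℝ) + 1 ≤ (a + 1) ^ 2 := by
    have : (i : ℝ) ≤ a := by exact_mod_cast hi
    nlinarith
  calc ((i : ℝ) + 1) * spacing a ≤ (a + 1) ^ 2 * spacing a :=
        mul_le_mul_of_nonneg_right hia spacing_pos.le
    _ = 1 / 4 := sq_add_one_mul_spacing

theorem sq_mul_spacing_le {i : ℕ} (hi : i ≤ a) : ((i : ℝ) * spacing a) ^ 2 ≤ spacing a / 4 := by
  have hia : (i : ℝ) ^ 2 ≤ (a + 1) ^ 2 := by
    have : (i : ℝ) ≤ a := by exact_mod_cast hi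
    gcongr; linarith
  calc ((i : ℝ) * spacing a) ^ 2 = (i : ℝ) ^ 2 * spacing a * spacing a := by ring
    _ ≤ (a + 1) ^ 2 * spacing a * spacing a := by have := spacing_pos (a := a); gcongr
    _ = spacing a / 4 := by rw [sq_add_one_mul_spacing]; ring

theorem spacing_le_quarter : spacing a ≤ 1 / 4 := by
  simpa using add_one_mul_spacing_le (Nat.zero_le a)

theorem dist_west_le_one_iff {i p : ℕ} {t : ℝ} (hi : i ≤ a) (ht : t ^ 2 ≤ spacing a / 4) :
    dist (!₂[west a i, 0] : Plane) !₂[p * spacing a, t] ≤ 1 ↔ p ≤ i := by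
  have hg := spacing_pos (a := a)
  have hi' := add_one_mul_spacing_le hi
  constructor
  · intro h
    by_contra! hpi
    have hpi' : (i : ℝ) + 1 ≤ p := by exact_mod_cast hpi
    have : 1 < |west a i - p * spacing a| := by
      rw [abs_sub_comm, lt_abs]; left; unfold west
      nlinarith [mul_le_mul_of_nonneg_right hpi' hg.le]
    exact this.trans_le abs_sub_le_dist_vec2 |>.not_ge h
  · intro hpi
    have hpi' : (p : ℝ) ≤ i := by exact_mod_cast hpi
    refine dist_vec2_le_one (δ := spacing a / 4) (by linarith [spacing_le_quarter (a := a)])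
      (abs_le.2 ⟨?_, ?_⟩) ht <;>
      unfold west <;> nlinarith [mul_le_mul_of_nonneg_right hpi' hg.le,
        mul_nonneg p.cast_nonneg hg.le]

theorem dist_east_le_one_iff {j p : ℕ} {t : ℝ} (hp : p ≤ a) (ht : t ^ 2 ≤ spacing a / 4) :
    dist (!₂[east a j, 0] : Plane) !₂[p * spacing a, t] ≤ 1 ↔ j ≤ p := by
  have hg := spacing_pos (a := a)
  have hp' := add_one_mul_spacing_le hp
  constructor
  · intro h
    by_contra! hpj
    have hpj' : (p : ℝ) + 1 ≤ j := by exact_mod_cast hpj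
    have : 1 < |east a j - p * spacing a| := by
      rw [lt_abs]; left; unfold east
      nlinarith [mul_le_mul_of_nonneg_right hpj' hg.le]
    exact this.trans_le abs_sub_le_dist_vec2 |>.not_ge h
  · intro hjp
    have hjp' : (j : ℝ) ≤ p := by exact_mod_cast hjp
    refine dist_vec2_le_one (δ := spacing a / 4) (by linarith [spacing_le_quarter (a := a)])
      (abs_le.2 ⟨?_, ?_⟩) ht <;>
      unfold east <;> nlinarith [mul_le_mul_of_nonneg_right hjp' hg.le,
        mul_nonneg j.cast_nonneg hg.le]

theorem two_lt_dist_west_east {i j : ℕ} (hij : i < j) :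
    2 < dist (!₂[west a i, 0] : Plane) !₂[east a j, 0] := by
  have hg := spacing_pos (a := a)
  have hij' : (i : ℝ) + 1 ≤ j := by exact_mod_cast hij
  refine lt_of_lt_of_le ?_ abs_sub_le_dist_vec2
  rw [abs_sub_comm, lt_abs]; left; unfold west east
  nlinarith [mul_le_mul_of_nonneg_right hij' hg.le]

theorem dist_west_north_lt_two {i k : ℕ} (hi : i ≤ a) (hk : k ≤ a) :
    dist (!₂[west a i, 0] : Plane) !₂[0, east a k] < 2 := by
  have hg := spacing_pos (a := a)
  have hi' := add_one_mul_spacing_le hi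
  have hk' := add_one_mul_spacing_le hk
  have hw : -1 ≤ west a i ∧ west a i ≤ 0 := by
    unfold west; constructor <;> nlinarith [mul_nonneg i.cast_nonneg hg.le]
  have he : 0 ≤ east a k ∧ east a k ≤ 5 / 4 := by
    unfold east; constructor <;> nlinarith [mul_nonneg k.cast_nonneg hg.le]
  rw [dist_vec2, Real.sqrt_lt' two_pos]
  nlinarith

theorem dist_north_le_one_iff {k q : ℕ} {s : ℝ} (hq : q ≤ a) (hs : s ^ 2 ≤ spacing a / 4) :
    dist (!₂[0, east a k] : Plane) !₂[s, q * spacing a] ≤ 1 ↔ k ≤ q := by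
  rw [dist_vec2_swap]; exact dist_east_le_one_iff hq hs

theorem dist_south_le_one_iff {l q : ℕ} {s : ℝ} (hl : l ≤ a) (hs : s ^ 2 ≤ spacing a / 4) :
    dist (!₂[0, west a l] : Plane) !₂[s, q * spacing a] ≤ 1 ↔ q ≤ l := by
  rw [dist_vec2_swap]; exact dist_west_le_one_iff hl hs

theorem two_lt_dist_south_north {l k : ℕ} (hlk : l < k) :
    2 < dist (!₂[0, west a l] : Plane) !₂[0, east a k] := by
  rw [dist_vec2_swap]; exact two_lt_dist_west_east hlk

@[simp] theorem point_west (i : Fin a) : point a (0, i) = !₂[west a i, 0] := rfl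
@[simp] theorem point_east (i : Fin a) : point a (1, i) = !₂[east a i, 0] := rfl
@[simp] theorem point_north (i : Fin a) : point a (2, i) = !₂[0, east a i] := rfl
@[simp] theorem point_south (i : Fin a) : point a (3, i) = !₂[0, west a i] := rfl

theorem west_neg {i : ℕ} (hi : i ≤ a) : west a i < 0 := by
  have := add_one_mul_spacing_le hi
  unfold west; nlinarith [spacing_pos (a := a)]

theorem east_pos (i : ℕ) : 0 < east a i := by
  have hg := spacing_pos (a := a)
  unfold east; nlinarith [spacing_le_quarter (a := a), mul_nonneg i.cast_nonneg hg.le]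

theorem west_strictMono : StrictMono (west a) := fun i j hij => by
  unfold west; gcongr; exact spacing_pos

theorem east_strictMono : StrictMono (east a) := fun i j hij => by
  unfold east; gcongr; exact spacing_pos

theorem point_injective : Injective (point a) := by
  rintro ⟨d, i⟩ ⟨d', j⟩ h
  have hwi := west_neg i.isLt.le
  have hwj := west_neg j.isLt.le
  have hei := east_pos (a := a) i
  have hej := east_pos (a := a) j
  fin_cases d <;> fin_cases d' <;>
    simp only [Fin.isValue, Fin.zero_eta, Fin.mk_one, Fin.reduceFinMk, point_west, point_east,
      point_north, point_south, WithLp.toLp.injEq, Matrix.vecCons_inj, Prod.mk.injEq,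
      Fin.reduceEq, zero_ne_one, one_ne_zero, and_true, true_and, false_and] at h ⊢ <;>
    first
    | exact Fin.val_injective (west_strictMono.injective h)
    | exact Fin.val_injective (east_strictMono.injective h)
    | linarith

theorem exists_far_point_of_one_lt_dist (p q : Fin a) (x : Fin 4 × Fin a)
    (hx : 1 < dist (point a x) (witness a p q)) :
    ∃ y, dist (point a y) (witness a p q) ≤ 1 ∧
      2 < dist (point a x) (point a y) := by
  obtain ⟨d, i⟩ := x
  have hp := sq_mul_spacing_le p.isLt.le
  have hq := sq_mul_spacing_le q.isLt.le
  fin_cases d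
  · have hip : i < p := lt_of_not_ge fun h =>
      hx.not_ge ((dist_west_le_one_iff i.isLt.le hq).2 h)
    exact ⟨(1, p), (dist_east_le_one_iff p.isLt.le hq).2 le_rfl, two_lt_dist_west_east hip⟩
  · have hpi : p < i := lt_of_not_ge fun h =>
      hx.not_ge ((dist_east_le_one_iff p.isLt.le hq).2 h)
    exact ⟨(0, p), (dist_west_le_one_iff p.isLt.le hq).2 le_rfl,
      dist_comm (α := Plane) .. ▸ two_lt_dist_west_east hpi⟩
  · have hqi : q < i := lt_of_not_ge fun h =>
      hx.not_ge ((dist_north_le_one_iff q.isLt.le hp).2 h)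
    exact ⟨(3, q), (dist_south_le_one_iff q.isLt.le hp).2 le_rfl,
      dist_comm (α := Plane) .. ▸ two_lt_dist_south_north hqi⟩
  · have hiq : i < q := lt_of_not_ge fun h =>
      hx.not_ge ((dist_south_le_one_iff i.isLt.le hp).2 h)
    exact ⟨(2, q), (dist_north_le_one_iff q.isLt.le hp).2 le_rfl, two_lt_dist_south_north hiq⟩

theorem point_west_mem_witnessCover_iff (i p q : Fin a) :
    point a (0, i) ∈ witnessCover a p q ↔ p ≤ i := by
  rw [witnessCover, coveredSet_closedBall, mem_inter_iff, mem_closedBall,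
    and_iff_right (mem_range_self _)]
  exact dist_west_le_one_iff i.isLt.le (sq_mul_spacing_le q.isLt.le)

theorem point_north_mem_witnessCover_iff (i p q : Fin a) :
    point a (2, i) ∈ witnessCover a p q ↔ i ≤ q := by
  rw [witnessCover, coveredSet_closedBall, mem_inter_iff, mem_closedBall,
    and_iff_right (mem_range_self _)]
  exact dist_north_le_one_iff q.isLt.le (sq_mul_spacing_le p.isLt.le)

theorem witnessCover_mem_canonicalSets (p q : Fin a) :
    witnessCover a p q ∈ canonicalSets (range (point a)) (closedBall 0 1) := by
  refine coveredSet_mem_canonicalSets_of_far ?_ ?_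
  · rw [← coveredSet_closedBall]
    exact ⟨_, (point_west_mem_witnessCover_iff p p q).2 le_rfl⟩
  · rintro _ ⟨x, rfl⟩ hx
    obtain ⟨y, hy, hxy⟩ := exists_far_point_of_one_lt_dist p q x hx
    exact ⟨_, mem_range_self y, hy, by linarith⟩

theorem witnessCover_injective :
    Injective fun pq : Fin a × Fin a => witnessCover a pq.1 pq.2 := by
  rintro ⟨p, q⟩ ⟨p', q'⟩ h
  simp only at h
  have hp : p' ≤ p := (point_west_mem_witnessCover_iff ..).1
    (h ▸ (point_west_mem_witnessCover_iff p p q).2 le_rfl)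
  have hp' : p ≤ p' := (point_west_mem_witnessCover_iff ..).1
    (h ▸ (point_west_mem_witnessCover_iff p' p' q').2 le_rfl)
  have hq : q ≤ q' := (point_north_mem_witnessCover_iff ..).1
    (h ▸ (point_north_mem_witnessCover_iff q p q).2 le_rfl)
  have hq' : q' ≤ q := (point_north_mem_witnessCover_iff ..).1
    (h ▸ (point_north_mem_witnessCover_iff q' p' q').2 le_rfl)
  rw [le_antisymm hp' hp, le_antisymm hq hq']

end CrossConfig

open CrossConfig in
theorem stmt_18_general (a : ℕ) :
    ∃ c : Fin (4 * a) → Plane, Function.Injective c ∧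
      a ^ 2 ≤ Set.ncard {p : Fin (4 * a) × Fin (4 * a) | p.1 < p.2 ∧
          dist (c p.1) (c p.2) < 2} ∧
      a ^ 2 ≤ (canonicalSets (Set.range c) (Metric.closedBall (0 : Plane) 1)).ncard := by
  set e : Fin 4 × Fin a ≃ Fin (4 * a) := finProdFinEquiv
  have hc (x : Fin 4 × Fin a) : (point a ∘ e.symm) (e x) = point a x := by simp
  have hcard : Nat.card (Fin a × Fin a) = a ^ 2 := by simp [sq]
  refine ⟨point a ∘ e.symm, point_injective.comp e.symm.injective, ?_, ?_⟩
  · refine hcard ▸ card_le_ncard_of_injective (fun ik => (e (0, ik.1), e (2, ik.2))) ?_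
      (fun ik => ⟨?_, ?_⟩) (toFinite _)
    · rintro ⟨i, k⟩ ⟨i', k'⟩ h
      simpa using h
    · simp only [e, Fin.lt_def, finProdFinEquiv_apply_val]; omega
    · simp only [hc]
      exact dist_west_north_lt_two ik.1.isLt.le ik.2.isLt.le
  · rw [EquivLike.range_comp]
    exact hcard ▸ card_le_ncard_of_injective _ witnessCover_injective
      (fun pq => witnessCover_mem_canonicalSets pq.1 pq.2) (canonicalSets_finite (finite_range _) _)

/-- for every `n = 4a` there is a configuration of `n` unit circles
with at least `a² = n²/16` intersecting pairs and at least `a²` distinct maximal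
(canonical) covered point sets, so the `k + n` bound is tight up to constants
(`k ≤ n(n-1)` always). -/
theorem stmt_18 (a : ℕ) (ha : 0 < a) :
    ∃ c : Fin (4 * a) → Plane, Function.Injective c ∧
      a ^ 2 ≤ Set.ncard {p : Fin (4 * a) × Fin (4 * a) | p.1 < p.2 ∧
          dist (c p.1) (c p.2) < 2} ∧
      a ^ 2 ≤ (canonicalSets (Set.range c) (Metric.closedBall (0 : Plane) 1)).ncard :=
  stmt_18_general a
end
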